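/- arXiv:1206.7104 — 3 statements merged into one kernel-verified Lean document; each statement's English description precedes it below -/
import Mathlib

section
/- The following two assertions are equivalent: (A) for every number field k and every morphism π : X → S of finite-type k-schemes there exists a bound B such that for every s ∈ S(k), if X_s(k) is finite then #X_s(k) ≤ B; (B) for every morphism π : X → S of finite-type ℚ-schemes there exists a bound B such that for every s ∈ S(ℚ), if X_s(ℚ) is finite then #X_s(ℚ) ≤ B. -/
/-!
The direction (A) ⇒ (B) is the case `k = ℚ`. Conversely, a `k`-point of `X` has a single
underlying point, so the fibres of `π` can be counted on a finite cover of `X` by affine opens,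
each mapping into an affine open of `S`; this reduces (A) to morphisms `Spec A → Spec R` of
finite-type `k`-algebras. The `k`-points of `Spec A` over a `k`-point of `Spec R` are exactly the
`ℚ`-points of the Weil restriction `R_{k/ℚ}(Spec A)` over the corresponding `ℚ`-point of
`R_{k/ℚ}(Spec R)`, and Weil restriction along the finite free extension `k/ℚ` preserves finite
type, so (B) applies to `R_{k/ℚ}(Spec A) → R_{k/ℚ}(Spec R)`.
-/

open AlgebraicGeometry CategoryTheory

universe u

theorem Function.Injective.finite_imp_ncard_image_le_iff {α β : Type*} {f : α → β}
    (hf : f.Injective) (s : Set α) (B : ℕ) :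
    ((f '' s).Finite → (f '' s).ncard ≤ B) ↔ (s.Finite → s.ncard ≤ B) := by
  rw [Set.finite_image_iff hf.injOn, Set.ncard_image_of_injective s hf]

theorem Module.Basis.repr_mul_apply {F K ι : Type*} [CommRing F] [CommRing K] [Algebra F K]
    [Fintype ι] (b : Basis ι F K) (x y : K) (j : ι) :
    b.repr (x * y) j = ∑ i, ∑ i', b.repr x i * b.repr y i' * b.repr (b i * b i') j := by
  conv_lhs => rw [← b.sum_repr x, ← b.sum_repr y]
  simp only [Finset.sum_mul_sum, smul_mul_smul_comm, map_sum, map_smul, Finsupp.coe_finsetSum,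
    Finsupp.coe_smul, Finset.sum_apply, Pi.smul_apply, smul_eq_mul, mul_assoc]

noncomputable section

open MvPolynomial

variable {F K ι : Type*} [CommRing F] [CommRing K] [Algebra F K] [Fintype ι]
  (b : Module.Basis ι F K) (A : Type*) [CommRing A] [Algebra K A]

/-- The variable `X (a, j)` stands for the `j`-th coordinate of `a` in the basis `b`; the
relations say that `a ↦ ∑ j, X (a, j) • b j` is a `K`-algebra map. -/
def weilRestrictionRelations : Set (MvPolynomial (A × ι) F) :=
  (Set.range fun x : A × A × ι =>
      X (x.1 + x.2.1, x.2.2) - (X (x.1, x.2.2) + X (x.2.1, x.2.2))) ∪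
  (Set.range fun x : A × A × ι => X (x.1 * x.2.1, x.2.2) -
      ∑ i, ∑ i', C (b.repr (b i * b i') x.2.2) * X (x.1, i) * X (x.2.1, i')) ∪
  Set.range fun x : K × ι => X (algebraMap K A x.1, x.2) - C (b.repr x.1 x.2)

/-- The Weil restriction of `Spec A` from `K` to `F` is `Spec (WeilRestriction b A)`. -/
abbrev WeilRestriction : Type _ :=
  MvPolynomial (A × ι) F ⧸ Ideal.span (weilRestrictionRelations b A)

namespace WeilRestriction

def coord (a : A) (j : ι) : WeilRestriction b A := Ideal.Quotient.mk _ (X (a, j))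

variable {A}

theorem coord_add (a a' : A) (j : ι) : coord b A (a + a') j = coord b A a j + coord b A a' j :=
  Ideal.Quotient.eq.mpr <| Ideal.subset_span <| .inl <| .inl ⟨(a, a', j), rfl⟩

theorem coord_mul (a a' : A) (j : ι) :
    coord b A (a * a') j = ∑ i, ∑ i', algebraMap F _ (b.repr (b i * b i') j) *
      coord b A a i * coord b A a' i' := by
  have := Ideal.Quotient.eq.mpr <| Ideal.subset_span (s := weilRestrictionRelations b A) <|
    .inl <| .inr ⟨(a, a', j), rfl⟩
  simp only [map_sum, map_mul] at this
  exact this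

theorem coord_algebraMap (c : K) (j : ι) :
    coord b A (algebraMap K A c) j = algebraMap F _ (b.repr c j) :=
  Ideal.Quotient.eq.mpr <| Ideal.subset_span <| .inr ⟨(c, j), rfl⟩

theorem algHom_ext {B : Type*} [CommRing B] [Algebra F B] {g g' : WeilRestriction b A →ₐ[F] B}
    (h : ∀ a j, g (coord b A a j) = g' (coord b A a j)) : g = g' :=
  Ideal.Quotient.algHom_ext _ <| MvPolynomial.algHom_ext fun v => h v.1 v.2

def ofAlgHom (τ : A →ₐ[K] K) : WeilRestriction b A →ₐ[F] F :=
  Ideal.Quotient.liftₐ _ (aeval fun v => b.repr (τ v.1) v.2) fun p hp => by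
    refine (Ideal.span_le (I := RingHom.ker (aeval fun v : A × ι => b.repr (τ v.1) v.2))).mpr
      ?_ hp
    rintro _ ((⟨⟨a, a', j⟩, rfl⟩ | ⟨⟨a, a', j⟩, rfl⟩) | ⟨⟨c, j⟩, rfl⟩) <;>
      simp only [SetLike.mem_coe, RingHom.mem_ker, map_sub, map_add, map_sum, map_mul, aeval_X,
        aeval_C, Algebra.algebraMap_self, RingHom.id_apply, AlgHom.commutes, sub_eq_zero]
    · simp
    · rw [b.repr_mul_apply]
      exact Finset.sum_congr rfl fun i _ => Finset.sum_congr rfl fun i' _ => by ring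

@[simp]
theorem ofAlgHom_coord (τ : A →ₐ[K] K) (a : A) (j : ι) :
    ofAlgHom b τ (coord b A a j) = b.repr (τ a) j :=
  aeval_X _ _

def toAlgHom (g : WeilRestriction b A →ₐ[F] F) : A →ₐ[K] K where
  toFun a := ∑ j, g (coord b A a j) • b j
  map_one' := b.ext_elem fun j => by
    rw [b.repr_sum_self, ← map_one (algebraMap K A), coord_algebraMap, g.commutes,
      Algebra.algebraMap_self, RingHom.id_apply]
  map_mul' a a' := b.ext_elem fun j => by
    rw [b.repr_mul_apply]
    simp only [b.repr_sum_self]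
    rw [coord_mul]
    simp only [map_sum, map_mul, g.commutes, Algebra.algebraMap_self, RingHom.id_apply]
    exact Finset.sum_congr rfl fun i _ => Finset.sum_congr rfl fun i' _ => by ring
  map_zero' := b.ext_elem fun j => by
    rw [b.repr_sum_self, ← map_zero (algebraMap K A), coord_algebraMap, g.commutes,
      Algebra.algebraMap_self, RingHom.id_apply]
  map_add' a a' := b.ext_elem fun j => by
    simp only [b.repr_sum_self, coord_add, map_add, Finsupp.add_apply]
  commutes' c := b.ext_elem fun j => by
    rw [b.repr_sum_self, coord_algebraMap, g.commutes, Algebra.algebraMap_self,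
      Algebra.algebraMap_self, RingHom.id_apply, RingHom.id_apply]

@[simp]
theorem repr_toAlgHom (g : WeilRestriction b A →ₐ[F] F) (a : A) (j : ι) :
    b.repr (toAlgHom b g a) j = g (coord b A a j) := by
  simp only [toAlgHom, AlgHom.coe_mk, RingHom.coe_mk, MonoidHom.coe_mk, OneHom.coe_mk,
    b.repr_sum_self]

def homEquiv : (WeilRestriction b A →ₐ[F] F) ≃ (A →ₐ[K] K) where
  toFun := toAlgHom b
  invFun := ofAlgHom b
  left_inv g := algHom_ext b fun a j => by simp
  right_inv τ := AlgHom.ext fun a => b.ext_elem fun j => by simp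

variable {R : Type*} [CommRing R] [Algebra K R]

def map (φ : R →ₐ[K] A) : WeilRestriction b R →ₐ[F] WeilRestriction b A :=
  Ideal.quotientMapₐ _ (rename (Prod.map φ id)) <| Ideal.span_le.mpr <| by
    rintro _ ((⟨⟨a, a', j⟩, rfl⟩ | ⟨⟨a, a', j⟩, rfl⟩) | ⟨⟨c, j⟩, rfl⟩) <;>
      refine Ideal.subset_span ?_
    · exact .inl <| .inl ⟨(φ a, φ a', j), by simp⟩
    · exact .inl <| .inr ⟨(φ a, φ a', j), by simp⟩
    · exact .inr ⟨(c, j), by simp⟩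

@[simp]
theorem map_coord (φ : R →ₐ[K] A) (r : R) (j : ι) :
    map b φ (coord b R r j) = coord b A (φ r) j := by
  simp [map, coord]

theorem homEquiv_comp_map (φ : R →ₐ[K] A) (g : WeilRestriction b A →ₐ[F] F) :
    homEquiv b (g.comp (map b φ)) = (homEquiv b g).comp φ :=
  AlgHom.ext fun r => b.ext_elem fun j => by simp [homEquiv]

theorem adjoin_range_coord :
    Algebra.adjoin F (Set.range fun v : A × ι => coord b A v.1 v.2) = ⊤ := by
  rw [show (Set.range fun v : A × ι => coord b A v.1 v.2) =
      Ideal.Quotient.mkₐ F _ '' Set.range X from Set.range_comp (Ideal.Quotient.mkₐ F _) X,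
    Algebra.adjoin_image, adjoin_range_X, Algebra.map_top, AlgHom.range_eq_top]
  exact Ideal.Quotient.mkₐ_surjective F _

instance [Algebra.FiniteType K A] : Algebra.FiniteType F (WeilRestriction b A) := by
  obtain ⟨s, hs⟩ := Algebra.FiniteType.out (R := K) (A := A)
  set gens := (fun v : A × ι => coord b A v.1 v.2) '' ((s : Set A) ×ˢ Set.univ)
  have hcoord (a : A) : ∀ j, coord b A a j ∈ Algebra.adjoin F gens := by
    induction (hs ▸ Algebra.mem_top : a ∈ Algebra.adjoin K (s : Set A)) using
      Algebra.adjoin_induction with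
    | mem x hx => exact fun j => Algebra.subset_adjoin ⟨(x, j), ⟨hx, trivial⟩, rfl⟩
    | algebraMap c =>
      intro j
      rw [coord_algebraMap]
      exact Subalgebra.algebraMap_mem _ _
    | add x y _ _ hx hy =>
      intro j
      rw [coord_add]
      exact add_mem (hx j) (hy j)
    | mul x y _ _ hx hy =>
      intro j
      rw [coord_mul]
      exact sum_mem fun i _ => sum_mem fun i' _ =>
        mul_mem (mul_mem (Subalgebra.algebraMap_mem _ _) (hx i)) (hy i')
  refine ⟨Subalgebra.fg_def.mpr ⟨gens, (s.finite_toSet.prod Set.finite_univ).image _, ?_⟩⟩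
  rw [eq_top_iff, ← adjoin_range_coord b, Algebra.adjoin_le_iff]
  rintro _ ⟨v, rfl⟩
  exact hcoord v.1 v.2

end WeilRestriction

end

section Fibers

open CommRingCat (ofHom)

variable {K : Type u} [CommRing K]

def HasBoundedFiniteFibers {X S : Scheme.{u}} (π : X ⟶ S) (pS : S ⟶ Spec (.of K)) : Prop :=
  ∃ B : ℕ, ∀ s : Spec (.of K) ⟶ S, s ≫ pS = 𝟙 _ →
    {t : Spec (.of K) ⟶ X | t ≫ π = s}.Finite →
      {t : Spec (.of K) ⟶ X | t ≫ π = s}.ncard ≤ B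

variable (K) in
/-- Question "main" of the paper over the base ring `K`. -/
def UniformBoundedness : Prop :=
  ∀ (X S : Scheme.{u}) (pX : X ⟶ Spec (.of K)) (pS : S ⟶ Spec (.of K)),
    LocallyOfFiniteType pX → QuasiCompact pX → LocallyOfFiniteType pS → QuasiCompact pS →
    ∀ π : X ⟶ S, π ≫ pS = pX → HasBoundedFiniteFibers π pS

def AlgHom.HasBoundedFiniteFibers {R A : Type*} [CommRing R] [CommRing A] [Algebra K R]
    [Algebra K A] (φ : R →ₐ[K] A) : Prop :=
  ∃ B : ℕ, ∀ σ : R →ₐ[K] K, {τ : A →ₐ[K] K | τ.comp φ = σ}.Finite →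
    {τ : A →ₐ[K] K | τ.comp φ = σ}.ncard ≤ B

variable (K) in
def AffineUniformBoundedness : Prop :=
  ∀ (R A : Type u) [CommRing R] [CommRing A] [Algebra K R] [Algebra K A],
    Algebra.FiniteType K R → Algebra.FiniteType K A →
      ∀ φ : R →ₐ[K] A, φ.HasBoundedFiniteFibers

theorem HasBoundedFiniteFibers.of_iso {X S X' S' : Scheme.{u}} {π : X ⟶ S} {π' : X' ⟶ S'}
    (eX : X ≅ X') (eS : S ≅ S') (w : π ≫ eS.hom = eX.hom ≫ π') {pS' : S' ⟶ Spec (.of K)}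
    (h : HasBoundedFiniteFibers π' pS') : HasBoundedFiniteFibers π (eS.hom ≫ pS') := by
  obtain ⟨B, hB⟩ := h
  refine ⟨B, fun s hs => ?_⟩
  have hfiber : (· ≫ eX.hom) '' {t | t ≫ π = s} = {t' | t' ≫ π' = s ≫ eS.hom} := by
    ext t'
    refine ⟨?_, fun ht' => ⟨t' ≫ eX.inv, ?_, by simp⟩⟩
    · rintro ⟨t, rfl, rfl⟩
      simp [w]
    · show _ ≫ π = s
      rw [← cancel_mono eS.hom, Category.assoc, w, Category.assoc, Iso.inv_hom_id_assoc, ht']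
  have hinj : Function.Injective fun t : Spec (.of K) ⟶ X => t ≫ eX.hom :=
    fun t t' h => by simpa using h =≫ eX.inv
  rw [← hinj.finite_imp_ncard_image_le_iff, hfiber]
  exact hB _ (by rwa [Category.assoc])

section Spec

variable {R A : Type u} [CommRing R] [CommRing A] [Algebra K R] [Algebra K A]

theorem exists_algHom_spec_map_eq (s : Spec (.of K) ⟶ Spec (.of R))
    (hs : s ≫ Spec.map (ofHom (algebraMap K R)) = 𝟙 _) :
    ∃ σ : R →ₐ[K] K, Spec.map (ofHom (σ : R →+* K)) = s := by
  obtain ⟨σ, rfl⟩ := Spec.map_surjective s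
  have h : ofHom (algebraMap K R) ≫ σ = 𝟙 _ :=
    Spec.map_injective (by rw [Spec.map_comp, hs, Spec.map_id])
  exact ⟨⟨σ.hom, fun c => congr(($h).hom c)⟩, rfl⟩

theorem spec_map_comp_spec_map_algebraMap (σ : R →ₐ[K] K) :
    Spec.map (ofHom (σ : R →+* K)) ≫ Spec.map (ofHom (algebraMap K R)) = 𝟙 _ := by
  rw [← Spec.map_comp, ← Spec.map_id]
  congr 1
  ext c
  exact σ.commutes c

theorem spec_map_fiber_eq_image (φ : R →ₐ[K] A) (σ : R →ₐ[K] K) :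
    {t : Spec (.of K) ⟶ Spec (.of A) |
      t ≫ Spec.map (ofHom (φ : R →+* A)) = Spec.map (ofHom (σ : R →+* K))} =
    (fun τ : A →ₐ[K] K => Spec.map (ofHom (τ : A →+* K))) '' {τ | τ.comp φ = σ} := by
  ext t
  refine ⟨fun ht => ?_, ?_⟩
  · obtain ⟨τ, rfl⟩ := Spec.map_surjective t
    have h : ofHom (φ : R →+* A) ≫ τ = ofHom (σ : R →+* K) :=
      Spec.map_injective (by rwa [Spec.map_comp])
    refine ⟨⟨τ.hom, fun c => ?_⟩, AlgHom.ext fun r => congr(($h).hom r), rfl⟩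
    simpa using congr(($h).hom (algebraMap K R c))
  · rintro ⟨τ, rfl, rfl⟩
    exact (Spec.map_comp _ _).symm

theorem hasBoundedFiniteFibers_spec_map_iff (φ : R →ₐ[K] A) :
    HasBoundedFiniteFibers (Spec.map (ofHom (φ : R →+* A)))
        (Spec.map (ofHom (algebraMap K R))) ↔ φ.HasBoundedFiniteFibers := by
  have hinj : Function.Injective fun τ : A →ₐ[K] K => Spec.map (ofHom (τ : A →+* K)) :=
    fun τ τ' h => AlgHom.coe_ringHom_injective congr($(Spec.map_injective h).hom)
  refine exists_congr fun B => ⟨fun h σ => ?_, fun h s hs => ?_⟩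
  · simpa only [spec_map_fiber_eq_image, hinj.finite_imp_ncard_image_le_iff] using
      h _ (spec_map_comp_spec_map_algebraMap σ)
  · obtain ⟨σ, rfl⟩ := exists_algHom_spec_map_eq s hs
    rw [spec_map_fiber_eq_image, hinj.finite_imp_ncard_image_le_iff]
    exact h σ

theorem locallyOfFiniteType_spec_map_algebraMap_iff :
    LocallyOfFiniteType (Spec.map (ofHom (algebraMap K R))) ↔ Algebra.FiniteType K R :=
  HasRingHomProperty.Spec_iff.trans RingHom.finiteType_algebraMap

instance [Algebra.FiniteType K R] : LocallyOfFiniteType (Spec.map (ofHom (algebraMap K R))) :=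
  locallyOfFiniteType_spec_map_algebraMap_iff.mpr ‹_›

end Spec

theorem UniformBoundedness.affine (h : UniformBoundedness K) : AffineUniformBoundedness K := by
  intro R A _ _ _ _ _ _ φ
  rw [← hasBoundedFiniteFibers_spec_map_iff]
  refine h _ _ _ _ ?_ inferInstance inferInstance inferInstance _ rfl
  rw [← Spec.map_comp, ← CommRingCat.ofHom_comp, φ.comp_algebraMap]
  infer_instance

theorem AlgHom.HasBoundedFiniteFibers.of_weilRestriction_map {F ι : Type*} [CommRing F]
    [Algebra F K] [Fintype ι] (b : Module.Basis ι F K) {R A : Type*} [CommRing R] [CommRing A]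
    [Algebra K R] [Algebra K A] (φ : R →ₐ[K] A)
    (h : (WeilRestriction.map b φ).HasBoundedFiniteFibers) : φ.HasBoundedFiniteFibers := by
  obtain ⟨B, hB⟩ := h
  refine ⟨B, fun σ => ?_⟩
  have hfiber : WeilRestriction.homEquiv b ''
      {g | g.comp (WeilRestriction.map b φ) = (WeilRestriction.homEquiv b).symm σ} =
      {τ | τ.comp φ = σ} := by
    ext τ
    rw [Equiv.image_eq_preimage_symm, Set.mem_preimage, Set.mem_ofPred_eq, Equiv.eq_symm_apply,
      WeilRestriction.homEquiv_comp_map, Equiv.apply_symm_apply, Set.mem_ofPred_eq]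
  rw [← hfiber, (WeilRestriction.homEquiv b).injective.finite_imp_ncard_image_le_iff]
  exact hB _

theorem AffineUniformBoundedness.of_finite_free {F : Type u} [CommRing F] [Algebra F K]
    [Module.Free F K] [Module.Finite F K] (h : AffineUniformBoundedness F) :
    AffineUniformBoundedness K := fun _ _ _ _ _ _ _ _ φ =>
  .of_weilRestriction_map (Module.Free.chooseBasis F K) φ (h _ _ inferInstance inferInstance _)

theorem AffineUniformBoundedness.hasBoundedFiniteFibers (h : AffineUniformBoundedness K)
    {W V : Scheme.{u}} [IsAffine W] [IsAffine V] (ρ : W ⟶ V) (pV : V ⟶ Spec (.of K))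
    [LocallyOfFiniteType (ρ ≫ pV)] [LocallyOfFiniteType pV] : HasBoundedFiniteFibers ρ pV := by
  obtain ⟨η, hη⟩ := Spec.map_surjective (V.isoSpec.inv ≫ pV)
  let _ := η.hom.toAlgebra
  let _ : Algebra K Γ(W, ⊤) := (η ≫ ρ.appTop).hom.toAlgebra
  have hV : Algebra.FiniteType K Γ(V, ⊤) := locallyOfFiniteType_spec_map_algebraMap_iff.mp <| by
    rw [show ofHom (algebraMap K Γ(V, ⊤)) = η from rfl, hη]
    infer_instance
  have hW : Algebra.FiniteType K Γ(W, ⊤) := locallyOfFiniteType_spec_map_algebraMap_iff.mp <| by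
    rw [show ofHom (algebraMap K Γ(W, ⊤)) = η ≫ ρ.appTop from rfl, Spec.map_comp, hη,
      Scheme.isoSpec_inv_naturality_assoc]
    infer_instance
  let φ : Γ(V, ⊤) →ₐ[K] Γ(W, ⊤) := ⟨ρ.appTop.hom, fun _ => rfl⟩
  have hpV : pV = V.isoSpec.hom ≫ Spec.map (ofHom (algebraMap K Γ(V, ⊤))) := by
    rw [show ofHom (algebraMap K Γ(V, ⊤)) = η from rfl, hη, Iso.hom_inv_id_assoc]
  rw [hpV]
  exact .of_iso W.isoSpec V.isoSpec (Scheme.isoSpec_hom_naturality ρ).symm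
    ((hasBoundedFiniteFibers_spec_map_iff φ).mpr (h _ _ hV hW φ))

end Fibers

section Gluing

variable {K : Type u} [Field K] {X S : Scheme.{u}} {π : X ⟶ S} {pS : S ⟶ Spec (.of K)}

theorem HasBoundedFiniteFibers.of_resLE {V : S.Opens} {W : X.Opens} (hWV : W ≤ π ⁻¹ᵁ V)
    (h : HasBoundedFiniteFibers (π.resLE V W hWV) (V.ι ≫ pS)) :
    HasBoundedFiniteFibers (W.ι ≫ π) pS := by
  obtain ⟨B, hB⟩ := h
  refine ⟨B, fun s hs => ?_⟩
  rcases Set.eq_empty_or_nonempty {u : Spec (.of K) ⟶ W | u ≫ W.ι ≫ π = s}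
    with he | ⟨u₀, hu₀ : u₀ ≫ W.ι ≫ π = s⟩
  · simp [he]
  have hfiber : {u : Spec (.of K) ⟶ W | u ≫ W.ι ≫ π = s} =
      {u | u ≫ π.resLE V W hWV = u₀ ≫ π.resLE V W hWV} := Set.ext fun u => by
    rw [Set.mem_ofPred_eq, Set.mem_ofPred_eq, ← cancel_mono V.ι, Category.assoc, Category.assoc,
      Scheme.Hom.resLE_comp_ι, hu₀]
  rw [hfiber]
  exact hB _ (by simpa [← hu₀] using hs)

theorem HasBoundedFiniteFibers.of_cover {ι : Type*} [Finite ι] (W : ι → X.Opens)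
    (hW : ∀ x, ∃ i, x ∈ W i) (h : ∀ i, HasBoundedFiniteFibers ((W i).ι ≫ π) pS) :
    HasBoundedFiniteFibers π pS := by
  choose B hB using h
  have := Fintype.ofFinite ι
  refine ⟨∑ i, B i, fun s hs hfin => ?_⟩
  let pieces i := (· ≫ (W i).ι) '' {u : Spec (.of K) ⟶ W i | u ≫ (W i).ι ≫ π = s}
  have hpieces i : pieces i ⊆ {t | t ≫ π = s} := by
    rintro _ ⟨u, hu, rfl⟩
    simpa using hu
  have hcover : {t | t ≫ π = s} ⊆ ⋃ i, pieces i := by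
    intro t ht
    -- `Spec K` is a single point, so `t` factors through any open containing its image.
    obtain ⟨i, hi⟩ := hW (t.base default)
    have hrange : Set.range t.base ⊆ Set.range (W i).ι.base := by
      rw [Scheme.Opens.range_ι]
      rintro _ ⟨p, rfl⟩
      rwa [Subsingleton.elim p default]
    refine Set.mem_iUnion.mpr ⟨i, IsOpenImmersion.lift _ t hrange, ?_,
      IsOpenImmersion.lift_fac _ _ hrange⟩
    rw [Set.mem_ofPred_eq, ← Category.assoc, IsOpenImmersion.lift_fac]
    exact ht
  have hinj i : Function.Injective fun u : Spec (.of K) ⟶ W i => u ≫ (W i).ι :=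
    fun u u' h => (cancel_mono _).mp h
  calc {t | t ≫ π = s}.ncard
      ≤ (⋃ i, pieces i).ncard :=
        Set.ncard_le_ncard hcover (hfin.subset (Set.iUnion_subset hpieces))
    _ ≤ ∑ i, (pieces i).ncard := Set.ncard_iUnion_le_of_fintype _
    _ ≤ ∑ i, B i := Finset.sum_le_sum fun i _ =>
        ((hinj i).finite_imp_ncard_image_le_iff _ _).mpr (hB i s hs) (hfin.subset (hpieces i))

theorem HasBoundedFiniteFibers.of_affineOpens [CompactSpace X]
    (h : ∀ (V : S.affineOpens) (W : X.affineOpens) (hWV : (W : X.Opens) ≤ π ⁻¹ᵁ V),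
      HasBoundedFiniteFibers (π.resLE V W hWV) ((V : S.Opens).ι ≫ pS)) :
    HasBoundedFiniteFibers π pS := by
  have hloc (x : X) : ∃ (V : S.affineOpens) (W : X.affineOpens),
      (W : X.Opens) ≤ π ⁻¹ᵁ V ∧ x ∈ (W : X.Opens) := by
    obtain ⟨V, hV, hxV, -⟩ :=
      exists_isAffineOpen_mem_and_subset (show π.base x ∈ (⊤ : S.Opens) from trivial)
    obtain ⟨W, hW, hxW, hWV⟩ :=
      exists_isAffineOpen_mem_and_subset (show x ∈ π ⁻¹ᵁ V from hxV)
    exact ⟨⟨V, hV⟩, ⟨W, hW⟩, hWV, hxW⟩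
  choose V W hWV hxW using hloc
  obtain ⟨t, ht⟩ := finite_cover_nhds fun x => (W x).1.isOpen.mem_nhds (hxW x)
  refine .of_cover (fun x : t => (W x : X.Opens)) (fun x => ?_)
    fun x => (h _ _ (hWV x)).of_resLE (hWV x)
  obtain ⟨y, hy, hxy⟩ := Set.mem_iUnion₂.mp (ht ▸ Set.mem_univ x)
  exact ⟨⟨y, hy⟩, hxy⟩

theorem UniformBoundedness.of_affine (h : AffineUniformBoundedness K) : UniformBoundedness K := by
  intro X S pX pS _ hqcX _ _ π hπ
  have : CompactSpace X := (quasiCompact_iff_compactSpace pX).mp hqcX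
  refine .of_affineOpens fun V W hWV => ?_
  have : LocallyOfFiniteType (π.resLE V W hWV ≫ (V : S.Opens).ι ≫ pS) := by
    rw [Scheme.Hom.resLE_comp_ι_assoc, hπ]
    infer_instance
  exact h.hasBoundedFiniteFibers _ _

end Gluing

/-- **Step in the proof of the Proposition.** Question "main" for all number fields
is equivalent to Question "main" for `ℚ`. -/
theorem uniform_boundedness_number_fields_iff_rat
    : (∀ (k : Type) [Field k] [NumberField k],
        ∀ (X S : Scheme) (pX : X ⟶ Spec (CommRingCat.of k))
          (pS : S ⟶ Spec (CommRingCat.of k)),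
        LocallyOfFiniteType pX → QuasiCompact pX →
        LocallyOfFiniteType pS → QuasiCompact pS →
        ∀ π : X ⟶ S, π ≫ pS = pX →
        ∃ B : ℕ, ∀ s : Spec (CommRingCat.of k) ⟶ S, s ≫ pS = 𝟙 _ →
          {t : Spec (CommRingCat.of k) ⟶ X | t ≫ π = s}.Finite →
          {t : Spec (CommRingCat.of k) ⟶ X | t ≫ π = s}.ncard ≤ B)
      ↔
      (∀ (X S : Scheme) (pX : X ⟶ Spec (CommRingCat.of ℚ))
          (pS : S ⟶ Spec (CommRingCat.of ℚ)),
        LocallyOfFiniteType pX → QuasiCompact pX →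
        LocallyOfFiniteType pS → QuasiCompact pS →
        ∀ π : X ⟶ S, π ≫ pS = pX →
        ∃ B : ℕ, ∀ s : Spec (CommRingCat.of ℚ) ⟶ S, s ≫ pS = 𝟙 _ →
          {t : Spec (CommRingCat.of ℚ) ⟶ X | t ≫ π = s}.Finite →
          {t : Spec (CommRingCat.of ℚ) ⟶ X | t ≫ π = s}.ncard ≤ B) :=
  ⟨fun h => h ℚ, fun h _ _ _ =>
    UniformBoundedness.of_affine (AffineUniformBoundedness.of_finite_free (F := ℚ)
      (UniformBoundedness.affine h))⟩
end

section
/- For all natural numbers r, m, d there exists a natural number n ≥ r such that for every system of polynomials f_1,…,f_m ∈ ℚ[x_1,…,x_r], each of total degree at most d, there exists a polynomial g ∈ ℚ[x_1,…,x_n] of total degree exactly 4 such that the projection ℚ^n → ℚ^r onto the first r coordinates restricts to a bijection from {y ∈ ℚ^n : g(y) = 0} onto {x ∈ ℚ^r : f_1(x) = ⋯ = f_m(x) = 0}. -/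
/-!
Introduce a variable `w_e` for every monomial `x ^ e` whose exponents are at most `d`, tied to
the `x`'s by the quadratic relations `w_0 = 1` and `w_e = w_{e - δ_j} * x_j`. These force
`w_e = x ^ e` (by well-founded induction on `e`), so each `f_i` becomes a linear form in the `w`'s
and the solutions of the system correspond to those of a system of degree at most two. Over `ℚ`
such a system is equivalent to the single equation "sum of squares `= 0`", of degree at most four;
adding `z ^ 4` for a fresh variable `z`, which must then vanish, makes the degree exactly four.
The number of variables, `r + (d + 1) ^ r + 1`, depends only on `r` and `d`.
-/

open MvPolynomial

namespace MvPolynomial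

variable {σ τ R : Type*}

section SumOfSquares

variable [CommRing R] [LinearOrder R] [IsStrictOrderedRing R] {ι : Type*} [Fintype ι]
  (P : ι → MvPolynomial σ R)

theorem eval_sum_sq_nonneg (y : σ → R) : 0 ≤ eval y (∑ i, P i ^ 2) := by
  simp only [map_sum, map_pow]
  exact Finset.sum_nonneg fun i _ => sq_nonneg _

theorem setOf_eval_sum_sq_eq_zero :
    {y | eval y (∑ i, P i ^ 2) = 0} = {y | ∀ i, eval y (P i) = 0} := by
  ext y
  simp [Finset.sum_eq_zero_iff_of_nonneg fun i _ => sq_nonneg (eval y (P i))]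

end SumOfSquares

theorem totalDegree_X_le [CommSemiring R] (s : σ) : (X s : MvPolynomial σ R).totalDegree ≤ 1 :=
  (totalDegree_monomial_le _ _).trans_eq (by simp)

theorem totalDegree_sum_sq_le [CommSemiring R] {ι : Type*} [Fintype ι]
    (P : ι → MvPolynomial σ R) {k : ℕ} (hP : ∀ i, (P i).totalDegree ≤ k) :
    (∑ i, P i ^ 2).totalDegree ≤ 2 * k :=
  (totalDegree_finsetSum _ _).trans <| Finset.sup_le fun i _ =>
    (totalDegree_pow _ _).trans (Nat.mul_le_mul_left 2 (hP i))

theorem totalDegree_X_pow_add_rename_inl [CommSemiring R] [Nontrivial R]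
    {q : MvPolynomial σ R} {k : ℕ} (hq : q.totalDegree ≤ k) :
    (X (Sum.inr ()) ^ k + rename Sum.inl q : MvPolynomial (σ ⊕ Unit) R).totalDegree = k := by
  refine le_antisymm ((totalDegree_add _ _).trans (max_le (totalDegree_X_pow _ _).le
    ((totalDegree_rename_le _ _).trans hq))) ?_
  rcases Nat.eq_zero_or_pos k with rfl | hk
  · exact Nat.zero_le _
  have hq_coeff : coeff (Finsupp.single (Sum.inr ()) k) (rename Sum.inl q) = 0 := by
    refine coeff_rename_eq_zero _ _ _ fun u hu => ?_
    have := congrArg (· (Sum.inr ())) hu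
    simp [Finsupp.mapDomain_of_notMem_range] at this
    omega
  have hmem : Finsupp.single (Sum.inr ()) k ∈
      (X (Sum.inr ()) ^ k + rename Sum.inl q : MvPolynomial (σ ⊕ Unit) R).support := by
    classical
    simp [coeff_add, hq_coeff, coeff_X_pow]
  simpa using le_totalDegree hmem

theorem bijOn_comp_inl_X_pow_add_rename_inl [CommRing R] [LinearOrder R]
    [IsStrictOrderedRing R] {q : MvPolynomial σ R} (hq : ∀ x, 0 ≤ eval x q) {k : ℕ}
    (hk : Even k) (hk0 : k ≠ 0) :
    Set.BijOn (fun y => y ∘ Sum.inl)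
      {y : σ ⊕ Unit → R | eval y (X (Sum.inr ()) ^ k + rename Sum.inl q) = 0}
      {x | eval x q = 0} := by
  have hzero : ∀ y : σ ⊕ Unit → R, eval y (X (Sum.inr ()) ^ k + rename Sum.inl q) = 0 ↔
      y (Sum.inr ()) = 0 ∧ eval (y ∘ Sum.inl) q = 0 := by
    intro y
    rw [map_add, eval_rename, map_pow, eval_X, add_eq_zero_iff_of_nonneg (hk.pow_nonneg _) (hq _),
      pow_eq_zero_iff hk0]
  refine Set.InvOn.bijOn (f' := fun x => Sum.elim x 0) ⟨fun y hy => ?_, fun x _ => rfl⟩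
    (fun y hy => ((hzero y).1 hy).2) (fun x hx => (hzero _).2 ⟨rfl, hx⟩)
  ext (i | ⟨⟩)
  · rfl
  · exact ((hzero y).1 hy).1.symm

theorem bijOn_comp_rename_equiv [CommSemiring R] (e : σ ≃ τ) (p : MvPolynomial σ R) :
    Set.BijOn (fun y => y ∘ e) {y : τ → R | eval y (rename e p) = 0} {x | eval x p = 0} := by
  refine Set.InvOn.bijOn (f' := fun x => x ∘ e.symm) ⟨fun y _ => ?_, fun x _ => ?_⟩
    (fun y hy => by simpa [eval_rename] using hy) (fun x hx => ?_)
  · ext; simp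
  · ext; simp
  · simpa [eval_rename, Function.comp_assoc] using hx

end MvPolynomial

noncomputable section

namespace SkolemReduction

variable {σ R : Type*} {d : ℕ}

abbrev Exponent (σ : Type*) (d : ℕ) := σ → Fin (d + 1)

section Relations

variable [DecidableEq σ]

def lowerExponent (e : Exponent σ d) (j : σ) : Exponent σ d :=
  Function.update e j (e j - 1)

theorem lowerExponent_lt {e : Exponent σ d} {j : σ} (hj : e j ≠ 0) : lowerExponent e j < e :=
  update_lt_self_iff.2 (Fin.sub_one_lt_iff.2 (Fin.pos_iff_ne_zero.2 hj))

theorem prod_pow_eq_prod_pow_lowerExponent_mul [Fintype σ] [CommMonoid R] (x : σ → R)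
    {e : Exponent σ d} {j : σ} (hj : e j ≠ 0) :
    ∏ k, x k ^ (e k : ℕ) = (∏ k, x k ^ (lowerExponent e j k : ℕ)) * x j := by
  have hlower : (fun k => x k ^ (lowerExponent e j k : ℕ)) =
      Function.update (fun k => x k ^ (e k : ℕ)) j (x j ^ ((e j : ℕ) - 1)) := by
    ext k
    rcases eq_or_ne k j with rfl | hk
    · simp [lowerExponent, Fin.coe_sub_one, hj]
    · simp [lowerExponent, hk]
  rw [hlower, Finset.prod_update_of_mem (Finset.mem_univ j), Fintype.prod_eq_mul_prod_compl j,
    Finset.compl_eq_univ_sdiff, mul_right_comm, ← pow_succ,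
    Nat.sub_add_cancel (Nat.one_le_iff_ne_zero.2 (Fin.val_ne_zero_iff.2 hj))]

variable [CommRing R]

/-- The variable `inr e` stands for the monomial `∏ k, x k ^ e k`; these relations define it
recursively, starting from the empty monomial. -/
def monomialRelation : Option (Exponent σ d × σ) → MvPolynomial (σ ⊕ Exponent σ d) R
  | none => X (Sum.inr 0) - 1
  | some (e, j) =>
    if e j = 0 then 0 else X (Sum.inr e) - X (Sum.inr (lowerExponent e j)) * X (Sum.inl j)

theorem totalDegree_monomialRelation_le (o : Option (Exponent σ d × σ)) :
    (monomialRelation o : MvPolynomial (σ ⊕ Exponent σ d) R).totalDegree ≤ 2 := by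
  rcases o with _ | ⟨e, j⟩
  · exact (totalDegree_sub_C_le _ _).trans (totalDegree_X_le _ |>.trans (by norm_num))
  · simp only [monomialRelation]
    split_ifs
    · simp
    · refine (totalDegree_sub _ _).trans (max_le ((totalDegree_X_le _).trans (by norm_num)) ?_)
      exact (totalDegree_mul _ _).trans (add_le_add (totalDegree_X_le _) (totalDegree_X_le _))

variable [Fintype σ]

def extendByMonomials (x : σ → R) : σ ⊕ Exponent σ d → R :=
  Sum.elim x fun e => ∏ k, x k ^ (e k : ℕ)

theorem eval_extendByMonomials_monomialRelation (x : σ → R) (o : Option (Exponent σ d × σ)) :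
    eval (extendByMonomials x) (monomialRelation o) = 0 := by
  rcases o with _ | ⟨e, j⟩
  · simp [monomialRelation, extendByMonomials]
  · simp only [monomialRelation]
    split_ifs with hj
    · exact map_zero _
    · simp [extendByMonomials, ← prod_pow_eq_prod_pow_lowerExponent_mul x hj]

theorem eq_extendByMonomials_of_eval_monomialRelation {y : σ ⊕ Exponent σ d → R}
    (hy : ∀ o, eval y (monomialRelation o) = 0) : y = extendByMonomials (y ∘ Sum.inl) := by
  ext (j | e)
  · rfl
  induction e using WellFoundedLT.induction with
  | _ e ih =>
    by_cases he : e = 0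
    · simpa [monomialRelation, extendByMonomials, he, sub_eq_zero] using hy none
    obtain ⟨j, hj⟩ : ∃ j, e j ≠ 0 := Function.ne_iff.1 he
    have hrel := hy (some (e, j))
    simp only [monomialRelation, hj, if_false, map_sub, map_mul, eval_X, sub_eq_zero] at hrel
    rw [hrel, ih _ (lowerExponent_lt hj)]
    simp [extendByMonomials, ← prod_pow_eq_prod_pow_lowerExponent_mul _ hj]

end Relations

variable [CommRing R]

/-- Replaces each monomial `x ^ α` of `f` by the variable `inr α`. Exponents are reduced
mod `d + 1`, so this is faithful only when `f.totalDegree ≤ d`. -/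
def linearize (d : ℕ) (f : MvPolynomial σ R) : MvPolynomial (σ ⊕ Exponent σ d) R :=
  ∑ α ∈ f.support, C (coeff α f) * X (Sum.inr fun j => Fin.ofNat (d + 1) (α j))

theorem totalDegree_linearize_le (f : MvPolynomial σ R) : (linearize d f).totalDegree ≤ 1 :=
  (totalDegree_finsetSum _ _).trans <| Finset.sup_le fun α _ =>
    (totalDegree_mul _ _).trans <| by simpa using totalDegree_X_le _

theorem eval_extendByMonomials_linearize [Fintype σ] {f : MvPolynomial σ R}
    (hf : f.totalDegree ≤ d) (x : σ → R) :
    eval (extendByMonomials x) (linearize d f) = eval x f := by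
  rw [linearize, map_sum, eval_eq']
  refine Finset.sum_congr rfl fun α hα => ?_
  have hα_le : ∀ j, α j ≤ d := fun j =>
    (Finsupp.le_degree j α).trans ((le_totalDegree hα).trans hf)
  simp [extendByMonomials, Nat.mod_eq_of_lt (Nat.lt_succ_of_le (hα_le _))]

variable {ι : Type*}

def skolemSystem [DecidableEq σ] (d : ℕ) (f : ι → MvPolynomial σ R) :
    ι ⊕ Option (Exponent σ d × σ) → MvPolynomial (σ ⊕ Exponent σ d) R :=
  Sum.elim (fun i => linearize d (f i)) monomialRelation

theorem totalDegree_skolemSystem_le [DecidableEq σ] (f : ι → MvPolynomial σ R)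
    (i : ι ⊕ Option (Exponent σ d × σ)) : (skolemSystem d f i).totalDegree ≤ 2 := by
  rcases i with i | o
  · exact (totalDegree_linearize_le _).trans (by norm_num)
  · exact totalDegree_monomialRelation_le o

theorem bijOn_comp_inl_skolemSystem [DecidableEq σ] [Fintype σ] {f : ι → MvPolynomial σ R}
    (hf : ∀ i, (f i).totalDegree ≤ d) :
    Set.BijOn (fun y => y ∘ Sum.inl) {y | ∀ i, eval y (skolemSystem d f i) = 0}
      {x | ∀ i, eval x (f i) = 0} := by
  have hext : ∀ y ∈ {y | ∀ i, eval y (skolemSystem d f i) = 0},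
      extendByMonomials (y ∘ Sum.inl) = y := fun y hy =>
    (eq_extendByMonomials_of_eval_monomialRelation (d := d) fun o => hy (Sum.inr o)).symm
  refine Set.InvOn.bijOn (f' := extendByMonomials) ⟨hext, fun x _ => rfl⟩ (fun y hy i => ?_) ?_
  · rw [← eval_extendByMonomials_linearize (hf i), hext y hy]
    exact hy (Sum.inl i)
  · rintro x hx (i | o)
    · exact (eval_extendByMonomials_linearize (hf i) x).trans (hx i)
    · exact eval_extendByMonomials_monomialRelation x o

end SkolemReduction

end

open SkolemReduction in
/-- **Key technical step (Skolem's trick + sum of squares + fourth power).**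
Every system of `m` polynomials of total degree at most `d` in `r` variables over `ℚ`
is equivalent to a single polynomial equation of total degree exactly `4` in `n`
variables, where `n` depends only on `r`, `m`, `d`; the projection onto the first `r`
coordinates is a bijection between the solution sets. -/
theorem system_equiv_degree_four_hypersurface
    (r m d : ℕ) :
    ∃ (n : ℕ) (hn : r ≤ n), ∀ f : Fin m → MvPolynomial (Fin r) ℚ,
      (∀ i, (f i).totalDegree ≤ d) →
      ∃ g : MvPolynomial (Fin n) ℚ, g.totalDegree = 4 ∧
        Set.BijOn (fun (y : Fin n → ℚ) (i : Fin r) => y (Fin.castLE hn i))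
          {y : Fin n → ℚ | eval y g = 0}
          {x : Fin r → ℚ | ∀ i, eval x (f i) = 0} := by
  let N := Fintype.card (Exponent (Fin r) d)
  let e : (Fin r ⊕ Exponent (Fin r) d) ⊕ Unit ≃ Fin (r + N + 1) :=
    (((Equiv.refl _).sumCongr (Fintype.equivFin _)).trans finSumFinEquiv).sumCongr
      finOneEquiv.symm |>.trans finSumFinEquiv
  have he : ∀ i, e (Sum.inl (Sum.inl i)) = Fin.castLE (by omega) i := fun i => by
    ext; simp [e]
  refine ⟨r + N + 1, by omega, fun f hf => ?_⟩
  refine ⟨rename e (X (Sum.inr ()) ^ 4 + rename Sum.inl (∑ i, skolemSystem d f i ^ 2)), ?_, ?_⟩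
  · exact (totalDegree_renameEquiv e _).trans
      (totalDegree_X_pow_add_rename_inl (totalDegree_sum_sq_le _ (totalDegree_skolemSystem_le f)))
  · have hfresh := bijOn_comp_inl_X_pow_add_rename_inl (eval_sum_sq_nonneg (skolemSystem d f))
      (by decide : Even 4) four_ne_zero
    rw [setOf_eval_sum_sq_eq_zero] at hfresh
    have hproj : (fun (y : Fin (r + N + 1) → ℚ) (i : Fin r) => y (Fin.castLE (by omega) i)) =
        (fun y => y ∘ Sum.inl) ∘ (fun y => y ∘ Sum.inl) ∘ fun y => y ∘ e := by
      ext y i; simp [he]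
    rw [hproj]
    exact (bijOn_comp_inl_skolemSystem hf).comp (hfresh.comp (bijOn_comp_rename_equiv e _))
end

section
/- For all natural numbers r and d there exist natural numbers n ≥ r and s such that for every polynomial f ∈ K[x_1,…,x_r] of total degree at most d over a field K, there exist polynomials g_1,…,g_s ∈ K[x_1,…,x_n], each of total degree at most 2, such that the projection K^n → K^r onto the first r coordinates restricts to a bijection from {y ∈ K^n : g_1(y) = ⋯ = g_s(y) = 0} onto {x ∈ K^r : f(x) = 0}. -/
/-!
Besides the variables `x_i`, introduce one variable `z_e` for every exponent vector `e` with
entries at most `d`, meant to stand for the monomial `x^e`. The quadratic equations `z_0 = 1`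
and `z_e = x_i z_{e - δ_i}` (for `e_i ≠ 0`) force, by induction on `|e|`, that `z_e = x^e`
on every solution; so a solution is determined by its `x`-part, every `x` extends to one, and
`f = ∑ c_e x^e` becomes the linear equation `∑ c_e z_e = 0`.
-/

open MvPolynomial

noncomputable section

namespace SkolemTrick

variable {σ K : Type*} [CommRing K] (d : ℕ)

abbrev SkolemVar (σ : Type*) (d : ℕ) := σ ⊕ (σ → Fin (d + 1))

def lowerExponent [DecidableEq σ] (e : σ → Fin (d + 1)) (i : σ) : σ → Fin (d + 1) :=
  Function.update e i (e i - 1)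

lemma val_lowerExponent_self [DecidableEq σ] {e : σ → Fin (d + 1)} {i : σ} (he : e i ≠ 0) :
    (lowerExponent d e i i : ℕ) + 1 = e i := by
  have hpos := Fin.pos_iff_ne_zero.mpr he
  simp [lowerExponent, Fin.coe_sub_one, he]
  omega

lemma lowerExponent_of_ne [DecidableEq σ] (e : σ → Fin (d + 1)) {i j : σ} (hj : j ≠ i) :
    lowerExponent d e i j = e j :=
  Function.update_of_ne hj _ _

lemma sum_lowerExponent_lt [Fintype σ] [DecidableEq σ] {e : σ → Fin (d + 1)} {i : σ}
    (he : e i ≠ 0) : ∑ j, (lowerExponent d e i j : ℕ) < ∑ j, (e j : ℕ) := by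
  rw [← Finset.add_sum_erase _ _ (Finset.mem_univ i),
    ← Finset.add_sum_erase _ (fun j => (e j : ℕ)) (Finset.mem_univ i),
    ← val_lowerExponent_self d he, Finset.sum_congr rfl fun j hj =>
      congrArg Fin.val (lowerExponent_of_ne d e (Finset.ne_of_mem_erase hj))]
  omega

lemma mul_prod_pow_lowerExponent [Fintype σ] [DecidableEq σ] (x : σ → K)
    {e : σ → Fin (d + 1)} {i : σ} (he : e i ≠ 0) :
    x i * ∏ j, x j ^ (lowerExponent d e i j : ℕ) = ∏ j, x j ^ (e j : ℕ) := by
  rw [← Finset.mul_prod_erase _ _ (Finset.mem_univ i),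
    ← Finset.mul_prod_erase _ (fun j => x j ^ (e j : ℕ)) (Finset.mem_univ i),
    ← val_lowerExponent_self d he, Finset.prod_congr rfl fun j hj => by
      rw [lowerExponent_of_ne d e (Finset.ne_of_mem_erase hj)]]
  ring

def monomialLift [Fintype σ] (x : σ → K) : SkolemVar σ d → K :=
  Sum.elim x fun e => ∏ i, x i ^ (e i : ℕ)

-- The guard matters: in `Fin (d + 1)`, `0 - 1` wraps around to `d`.
def stepRelation [DecidableEq σ] (e : σ → Fin (d + 1)) (i : σ) :
    MvPolynomial (SkolemVar σ d) K :=
  if e i = 0 then 0 else X (.inr e) - X (.inl i) * X (.inr (lowerExponent d e i))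

-- Reduces exponents modulo `d + 1`, which is harmless for monomials of degree at most `d`.
def truncateExponent (m : σ →₀ ℕ) : σ → Fin (d + 1) := fun i => Fin.ofNat (d + 1) (m i)

def linearization [Fintype σ] (f : MvPolynomial σ K) : MvPolynomial (SkolemVar σ d) K :=
  ∑ m ∈ f.support, C (coeff m f) * X (.inr (truncateExponent d m))

def skolemSystem [Fintype σ] [DecidableEq σ] (f : MvPolynomial σ K) :
    Option (Option ((σ → Fin (d + 1)) × σ)) → MvPolynomial (SkolemVar σ d) K
  | none => linearization d f
  | some none => X (.inr 0) - 1
  | some (some (e, i)) => stepRelation d e i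

lemma totalDegree_skolemSystem_le [Fintype σ] [DecidableEq σ] [Nontrivial K]
    (f : MvPolynomial σ K) (j) : (skolemSystem d f j).totalDegree ≤ 2 := by
  rcases j with _ | _ | ⟨e, i⟩
  · refine (totalDegree_finsetSum _ _).trans (Finset.sup_le fun m _ => ?_)
    exact (totalDegree_mul _ _).trans (by simp [totalDegree_X])
  · exact (totalDegree_sub _ _).trans (max_le (by simp [totalDegree_X]) (by simp))
  · show (stepRelation d e i).totalDegree ≤ 2
    unfold stepRelation
    split_ifs
    · simp
    · refine (totalDegree_sub _ _).trans (max_le (by simp [totalDegree_X]) ?_)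
      exact (totalDegree_mul _ _).trans (by simp [totalDegree_X])

lemma eval_monomialLift_stepRelation [Fintype σ] [DecidableEq σ] (x : σ → K)
    (e : σ → Fin (d + 1)) (i : σ) : eval (monomialLift d x) (stepRelation d e i) = 0 := by
  unfold stepRelation
  split_ifs with he
  · exact map_zero _
  · simp [monomialLift, mul_prod_pow_lowerExponent d x he]

lemma eval_monomialLift_linearization [Fintype σ] {f : MvPolynomial σ K}
    (hf : f.totalDegree ≤ d) (x : σ → K) :
    eval (monomialLift d x) (linearization d f) = eval x f := by
  rw [linearization, map_sum, eval_eq']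
  refine Finset.sum_congr rfl fun m hm => ?_
  have hmd : ∀ i, m i < d + 1 := fun i =>
    Nat.lt_succ_of_le ((m.le_degree i).trans ((le_totalDegree hm).trans hf))
  simp [monomialLift, truncateExponent, Nat.mod_eq_of_lt (hmd _)]

lemma apply_inr_eq_prod_pow_of_eval_stepRelation [Fintype σ] [DecidableEq σ]
    (y : SkolemVar σ d → K) (hone : y (.inr 0) = 1)
    (hstep : ∀ e i, eval y (stepRelation d e i) = 0) (e : σ → Fin (d + 1)) :
    y (.inr e) = ∏ i, y (.inl i) ^ (e i : ℕ) := by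
  induction e using (measure fun e : σ → Fin (d + 1) => ∑ i, (e i : ℕ)).wf.induction with
  | h e ih =>
  by_cases he : e = 0
  · simp [he, hone]
  obtain ⟨i, hi⟩ : ∃ i, e i ≠ 0 := Function.ne_iff.mp he
  have hrel := hstep e i
  simp only [stepRelation, if_neg hi, map_sub, map_mul, eval_X, sub_eq_zero] at hrel
  rw [hrel, ih _ (sum_lowerExponent_lt d hi)]
  exact mul_prod_pow_lowerExponent d (fun i => y (.inl i)) hi

theorem zeroSet_skolemSystem [Fintype σ] [DecidableEq σ] {f : MvPolynomial σ K}
    (hf : f.totalDegree ≤ d) :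
    {y | ∀ j, eval y (skolemSystem d f j) = 0} = monomialLift d '' {x | eval x f = 0} := by
  ext y
  constructor
  · intro h
    have hy : monomialLift d (y ∘ .inl) = y := by
      funext v
      rcases v with i | e
      · rfl
      · exact (apply_inr_eq_prod_pow_of_eval_stepRelation d y
          (by simpa [skolemSystem, sub_eq_zero] using h (some none))
          (fun e i => h (some (some (e, i)))) e).symm
    refine ⟨y ∘ .inl, ?_, hy⟩
    rw [Set.mem_ofPred_eq, ← eval_monomialLift_linearization d hf, hy]
    exact h none
  · rintro ⟨x, hx, rfl⟩ (_ | _ | ⟨e, i⟩)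
    · exact (eval_monomialLift_linearization d hf x).trans hx
    · simp [skolemSystem, monomialLift]
    · exact eval_monomialLift_stepRelation d x e i

theorem bijOn_comp_inl_zeroSet_skolemSystem [Fintype σ] [DecidableEq σ] {f : MvPolynomial σ K}
    (hf : f.totalDegree ≤ d) :
    Set.BijOn (· ∘ .inl) {y | ∀ j, eval y (skolemSystem d f j) = 0} {x | eval x f = 0} := by
  have hinv : Function.LeftInverse (· ∘ Sum.inl) (monomialLift (σ := σ) (K := K) d) :=
    fun _ => rfl
  rw [zeroSet_skolemSystem d hf]
  exact hinv.injective.injOn.bijOn_image.symm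
    ⟨hinv.rightInvOn_range.mono (Set.image_subset_range _ _), hinv.leftInvOn _⟩

end SkolemTrick

end

open SkolemTrick in
/-- **Skolem's trick.** For all `r`, `d` there are `n ≥ r` and `s`, depending only on
`r` and `d`, such that any polynomial of total degree at most `d` in `r` variables over
any field `K` has the same solution set, up to the bijection given by projection onto
the first `r` coordinates, as a system of `s` polynomials of total degree at most `2`
in `n` variables. -/
theorem skolem_trick_degree_two_system
    (r d : ℕ) :
    ∃ (n : ℕ) (hn : r ≤ n) (s : ℕ),
      ∀ (K : Type) [Field K], ∀ f : MvPolynomial (Fin r) K,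
        f.totalDegree ≤ d →
        ∃ g : Fin s → MvPolynomial (Fin n) K,
          (∀ j, (g j).totalDegree ≤ 2) ∧
          Set.BijOn (fun (y : Fin n → K) (i : Fin r) => y (Fin.castLE hn i))
            {y : Fin n → K | ∀ j, eval y (g j) = 0}
            {x : Fin r → K | eval x f = 0} := by
  let vars : SkolemVar (Fin r) d ≃ Fin (r + Fintype.card (Fin r → Fin (d + 1))) :=
    (Equiv.sumCongr (.refl _) (Fintype.equivFin _)).trans finSumFinEquiv
  let eqns := Fintype.equivFin (Option (Option ((Fin r → Fin (d + 1)) × Fin r)))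
  refine ⟨_, Nat.le_add_right _ _, _,
    fun K _ f hf => ⟨fun j => rename vars (skolemSystem d f (eqns.symm j)),
      fun j => (totalDegree_rename_le _ _).trans (totalDegree_skolemSystem_le d f _), ?_⟩⟩
  have hzero : {y | ∀ j, eval y (rename vars (skolemSystem d f (eqns.symm j))) = 0} =
      (· ∘ vars) ⁻¹' {z | ∀ j, eval z (skolemSystem d f j) = 0} := by
    ext y
    simp only [Set.mem_ofPred_eq, Set.mem_preimage, eval_rename]
    exact eqns.symm.forall_congr_right (q := fun j => eval (y ∘ vars) (skolemSystem d f j) = 0)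
  have hproj : (fun (y : Fin _ → K) (i : Fin r) => y (Fin.castLE (Nat.le_add_right _ _) i)) =
      (· ∘ Sum.inl) ∘ (· ∘ vars) := rfl
  rw [hzero, hproj]
  exact (bijOn_comp_inl_zeroSet_skolemSystem d hf).comp vars.bijective.comp_right.bijOn_preimage
end
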